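/- arXiv:2109.00196 — 3 statements merged into one kernel-verified Lean document; each statement's English description precedes it below -/
import Mathlib

section
/- Let F: C → D be a full, dense, objective additive functor between additive categories. Then F induces an equivalence C/[Ker F] ≅ D, where Ker F denotes the full subcategory of objects X with F(X) = 0 and [Ker F] is the ideal of morphisms factoring through an object of Ker F. -/
/-!
For an additive functor, `F f = F g` iff `F (f - g) = 0`, and objectivity says this happens iff
`f - g` factors through `Ker F`. So `[Ker F]` is the relation `F f = F g`, and the quotient by
that relation is equivalent to `D` as soon as `F` is full and dense.
-/

open CategoryTheory Limits Opposite

universe v u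

namespace Paper

variable {C D : Type u} [Category.{v} C] [Category.{v} D] [Preadditive C] [Preadditive D]

/-- The ideal relation on `C` associated to the kernel objects of a functor `F`:
two morphisms are identified iff their difference factors through an object `K`
with `F(K) = 0`.  The quotient category `Quotient (kerRel F)` is `C/[Ker F]`. -/
def kerRel (F : C ⥤ D) : HomRel C := fun {A A'} f g =>
  ∃ (K : C) (a : A ⟶ K) (b : K ⟶ A'), IsZero (F.obj K) ∧ a ≫ b = f - g

def IsObjective (F : C ⥤ D) : Prop :=
  ∀ {A A' : C} (f : A ⟶ A'), F.map f = 0 →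
    ∃ (K : C) (a : A ⟶ K) (b : K ⟶ A'), IsZero (F.obj K) ∧ a ≫ b = f

lemma map_eq_of_kerRel (F : C ⥤ D) [F.Additive] {A A' : C} {f g : A ⟶ A'}
    (h : kerRel F f g) : F.map f = F.map g := by
  obtain ⟨K, a, b, hK, hab⟩ := h
  rw [← sub_eq_zero, ← F.map_sub, ← hab, F.map_comp, hK.eq_of_src (F.map b) 0, comp_zero]

lemma kerRel_of_map_eq {F : C ⥤ D} [F.Additive] (hF : IsObjective F) {A A' : C}
    {f g : A ⟶ A'} (h : F.map f = F.map g) : kerRel F f g :=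
  hF (f - g) (by rw [F.map_sub, h, sub_self])

lemma kerRel_eq_homRel {F : C ⥤ D} [F.Additive] (hF : IsObjective F) : kerRel F = F.homRel := by
  funext A A' f g
  exact propext ⟨map_eq_of_kerRel F, kerRel_of_map_eq hF⟩

/-- A full, dense (essentially surjective), objective additive functor
`F : C ⥤ D` induces an equivalence `C/[Ker F] ≌ D` compatible with the quotient
functor. -/
theorem equivalence_of_full_dense_objective (F : C ⥤ D) [F.Additive] [F.Full] [F.EssSurj]
    (hobjective : ∀ {A A' : C} (f : A ⟶ A'), F.map f = 0 →
      ∃ (K : C) (a : A ⟶ K) (b : K ⟶ A'), IsZero (F.obj K) ∧ a ≫ b = f) :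
    ∃ e : CategoryTheory.Quotient (kerRel F) ≌ D,
      Nonempty (Quotient.functor (kerRel F) ⋙ e.functor ≅ F) := by
  rw [kerRel_eq_homRel hobjective]
  have hlift : ∀ (X Y : C) (f g : X ⟶ Y), F.homRel f g → F.map f = F.map g := fun _ _ _ _ ↦ id
  exact ⟨(CategoryTheory.Quotient.lift F.homRel F hlift).asEquivalence,
    ⟨Quotient.lift.isLift F.homRel F hlift⟩⟩

end Paper
end

section
/- Let (C, E, s) be a skeletally small extriangulated category with weak kernels. The full subcategory def E of mod C consisting of functors isomorphic to contravariant defects of conflations equals the full subcategory eff E of effaceable functors, and def E is a Serre subcategory of mod C. -/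
/-! Defects are effaceable: an element of `Coker C(-,y)` at `X` lifts to `t : X ⟶ Z`, and the
deflation realizing the pulled-back extension `E(t)(δ)` kills it. Conversely, if
`F = Coker C(-,f)` with `f : X ⟶ Y` is effaceable, effacing the image of `𝟙 Y` in `F(Y)` gives a
deflation `h ≫ f`; pulling it back inside `X ⊕ Y` produces a deflation `e` such that `e` and `f`
factor through each other, so `F ≅ Coker C(-,e)`. Effaceability passes to subobjects, quotients
and, since deflations compose, to extensions; this gives the Serre property. -/

open CategoryTheory Limits Opposite

universe v u



namespace Paper

variable (C : Type u) [Category.{v} C]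

/-- A category has weak kernels if every morphism admits a weak kernel. -/
def HasWeakKernels [Preadditive C] : Prop :=
  ∀ ⦃X Y : C⦄ (f : X ⟶ Y), ∃ (K : C) (k : K ⟶ X), k ≫ f = 0 ∧
    ∀ ⦃Z : C⦄ (g : Z ⟶ X), g ≫ f = 0 → ∃ h : Z ⟶ K, h ≫ k = g

variable {C}

/-- A (right) module over `C`, i.e. an object of `Mod C = (Cᵒᵖ ⥤ Ab)`, is finitely
presented if it admits a presentation `C(-,X) ⟶ C(-,Y) ⟶ F ⟶ 0`. -/
def IsFP [Preadditive C] (F : Cᵒᵖ ⥤ AddCommGrpCat.{v}) : Prop :=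
  ∃ (X Y : C) (f : X ⟶ Y) (p : preadditiveYoneda.obj Y ⟶ F)
    (w : preadditiveYoneda.map f ≫ p = 0),
      Epi p ∧ (ShortComplex.mk _ _ w).Exact

/-- A covariant module over `C` is finitely presented if it admits a presentation
`C(Y,-) ⟶ C(X,-) ⟶ F ⟶ 0`. -/
def IsFPCo [Preadditive C] (F : C ⥤ AddCommGrpCat.{v}) : Prop :=
  ∃ (X Y : C) (f : X ⟶ Y) (p : preadditiveCoyoneda.obj (op X) ⟶ F)
    (w : preadditiveCoyoneda.map f.op ≫ p = 0),
      Epi p ∧ (ShortComplex.mk _ _ w).Exact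

/-- `S` is a Serre subcategory of the (full abelian sub)category `D` of the ambient
abelian category `A`: it is closed under subobjects, quotients and extensions taken
in `D`. -/
def IsSerreIn {A : Type*} [Category A] [Abelian A] (D S : Set A) : Prop :=
  S ⊆ D ∧
  (∀ ⦃X Y : A⦄ (f : X ⟶ Y), Mono f → X ∈ D → Y ∈ S → X ∈ S) ∧
  (∀ ⦃X Y : A⦄ (f : X ⟶ Y), Epi f → Y ∈ D → X ∈ S → Y ∈ S) ∧
  (∀ (s : ShortComplex A), s.ShortExact → s.X₂ ∈ D → s.X₁ ∈ S → s.X₃ ∈ S → s.X₂ ∈ S)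

end Paper



namespace Paper

variable (C : Type u) [Category.{v} C] [Preadditive C]

/-- An extriangulated (= 1-exangulated) category structure on `C`: a biadditive
`Ab`-valued bifunctor `E` together with a realization predicate `Conf x y δ`
("`A ⟶x B ⟶y Z` is a conflation realizing `δ ∈ E(Z,A)`"), satisfying:
every extension is realized, realized sequences are complexes which give the
exact sequences of functors required by the axioms of Nakaoka–Palu, and
inflations/deflations are closed under composition (EA1). -/
structure ExtCat where
  E : Cᵒᵖ ⥤ C ⥤ AddCommGrpCat.{v}
  Conf : ∀ {A B Z : C}, (A ⟶ B) → (B ⟶ Z) → ((E.obj (op Z)).obj A) → Prop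
  real : ∀ {A Z : C} (δ : (E.obj (op Z)).obj A), ∃ (B : C) (x : A ⟶ B) (y : B ⟶ Z), Conf x y δ
  conf_comp_zero : ∀ {A B Z : C} {x : A ⟶ B} {y : B ⟶ Z} {δ}, Conf x y δ → x ≫ y = 0
  ex_right : ∀ {A B Z : C} {x : A ⟶ B} {y : B ⟶ Z} {δ}, Conf x y δ →
    ∀ {T : C} (g : T ⟶ Z), (∃ h : T ⟶ B, h ≫ y = g) ↔ (E.map g.op).app A δ = 0
  ex_mid_right : ∀ {A B Z : C} {x : A ⟶ B} {y : B ⟶ Z} {δ}, Conf x y δ →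
    ∀ {T : C} (h : T ⟶ B), h ≫ y = 0 → ∃ e : T ⟶ A, e ≫ x = h
  ex_left : ∀ {A B Z : C} {x : A ⟶ B} {y : B ⟶ Z} {δ}, Conf x y δ →
    ∀ {T : C} (g : A ⟶ T), (∃ h : B ⟶ T, x ≫ h = g) ↔ ((E.obj (op Z)).map g) δ = 0
  ex_mid_left : ∀ {A B Z : C} {x : A ⟶ B} {y : B ⟶ Z} {δ}, Conf x y δ →
    ∀ {T : C} (h : B ⟶ T), x ≫ h = 0 → ∃ e : Z ⟶ T, y ≫ e = h
  defl_comp : ∀ {X Y Z : C} (f : X ⟶ Y) (g : Y ⟶ Z),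
    (∃ (A : C) (x : A ⟶ X)(δ : _), Conf x f δ) → (∃ (A : C) (x : A ⟶ Y)(δ : _), Conf x g δ) →
    ∃ (A : C) (x : A ⟶ X)(δ : _), Conf x (f ≫ g) δ
  infl_comp : ∀ {X Y Z : C} (f : X ⟶ Y) (g : Y ⟶ Z),
    (∃ (W : C) (y : Y ⟶ W)(δ : _), Conf f y δ) → (∃ (W : C) (y : Z ⟶ W)(δ : _), Conf g y δ) →
    ∃ (W : C) (y : Z ⟶ W)(δ : _), Conf (f ≫ g) y δ

namespace ExtCat

variable {C}
variable (ET : ExtCat C)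

/-- `y` is an `s`-deflation. -/
def IsDeflation {B Z : C} (y : B ⟶ Z) : Prop :=
  ∃ (A : C) (x : A ⟶ B)(δ : _), ET.Conf x y δ

/-- `x` is an `s`-inflation. -/
def IsInflation {A B : C} (x : A ⟶ B) : Prop :=
  ∃ (Z : C) (y : B ⟶ Z)(δ : _), ET.Conf x y δ

/-- `P` is projective: morphisms from `P` lift along deflations. -/
def IsProj (P : C) : Prop :=
  ∀ {A B Z : C} (x : A ⟶ B) (y : B ⟶ Z)(δ : _), ET.Conf x y δ →
    ∀ c : P ⟶ Z, ∃ b : P ⟶ B, b ≫ y = c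

/-- `I` is injective: morphisms to `I` extend along inflations. -/
def IsInj (I : C) : Prop :=
  ∀ {A B Z : C} (x : A ⟶ B) (y : B ⟶ Z)(δ : _), ET.Conf x y δ →
    ∀ a : A ⟶ I, ∃ b : B ⟶ I, x ≫ b = a

/-- `C` has enough projectives. -/
def EnoughProj : Prop :=
  ∀ Z : C, ∃ (A P : C) (x : A ⟶ P) (y : P ⟶ Z)(δ : _), ET.IsProj P ∧ ET.Conf x y δ

/-- `C` has enough injectives. -/
def EnoughInj : Prop :=
  ∀ A : C, ∃ (I S : C) (x : A ⟶ I) (y : I ⟶ S)(δ : _), ET.IsInj I ∧ ET.Conf x y δ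

end ExtCat

/-- The contravariant defect of a conflation with deflation `y`:
`Coker(C(-,B) ⟶ C(-,Z))` in `Mod C`. -/
noncomputable def defect {B Z : C} (y : B ⟶ Z) : Cᵒᵖ ⥤ AddCommGrpCat.{v} :=
  cokernel (preadditiveYoneda.map y)

/-- The covariant defect of a conflation with inflation `x`:
`Coker(C(B,-) ⟶ C(A,-))`. -/
noncomputable def codefect {A B : C} (x : A ⟶ B) : C ⥤ AddCommGrpCat.{v} :=
  cokernel (preadditiveCoyoneda.map x.op)

namespace ExtCat

variable {C} (ET : ExtCat C)

/-- The subcategory `def E ⊆ Mod C` of functors isomorphic to a contravariant defect. -/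
noncomputable def defSet : Set (Cᵒᵖ ⥤ AddCommGrpCat.{v}) :=
  {G | ∃ (B Z : C) (y : B ⟶ Z), ET.IsDeflation y ∧ Nonempty (G ≅ defect C y)}

/-- An additive subbifunctor of `E`. -/
structure Subfunctor where
  carrier : ∀ (Z : Cᵒᵖ) (A : C), AddSubgroup ((ET.E.obj Z).obj A)
  map₁ : ∀ {Z Z' : Cᵒᵖ} (g : Z ⟶ Z') (A : C) (δ : (ET.E.obj Z).obj A),
    δ ∈ carrier Z A → (ET.E.map g).app A δ ∈ carrier Z' A
  map₂ : ∀ (Z : Cᵒᵖ) {A A' : C} (a : A ⟶ A') (δ : (ET.E.obj Z).obj A),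
    δ ∈ carrier Z A → ((ET.E.obj Z).map a) δ ∈ carrier Z A'

variable {ET}

/-- `y` is a deflation of the substructure determined by a subbifunctor `F ⊆ E`. -/
def Subfunctor.IsDefl (F : ET.Subfunctor) {B Z : C} (y : B ⟶ Z) : Prop :=
  ∃ (A : C) (x : A ⟶ B) (δ : (ET.E.obj (op Z)).obj A), ET.Conf x y δ ∧ δ ∈ F.carrier (op Z) A

/-- A subbifunctor `F ⊆ E` is closed iff its deflations are stable under composition,
equivalently `(C, F, s|_F)` is extriangulated. -/
def Subfunctor.IsClosed (F : ET.Subfunctor) : Prop :=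
  ∀ {X Y Z : C} (f : X ⟶ Y) (g : Y ⟶ Z), F.IsDefl f → F.IsDefl g → F.IsDefl (f ≫ g)

/-- The defects of the substructure determined by a subbifunctor. -/
noncomputable def Subfunctor.defSet (F : ET.Subfunctor) : Set (Cᵒᵖ ⥤ AddCommGrpCat.{v}) :=
  {G | ∃ (B Z : C) (y : B ⟶ Z), F.IsDefl y ∧ Nonempty (G ≅ defect C y)}

/-- An effaceable functor. -/
def Effaceable (ET : ExtCat C) (F : Cᵒᵖ ⥤ AddCommGrpCat.{v}) : Prop :=
  ∀ (X : C) (x : F.obj (op X)), ∃ (Y : C) (α : Y ⟶ X), ET.IsDeflation α ∧ F.map α.op x = 0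

end ExtCat

end Paper

namespace Paper

section

variable {C : Type u} [Category.{v} C]

lemma cokernel_π_app_app_apply {F G : Cᵒᵖ ⥤ AddCommGrpCat.{v}} (m : F ⟶ G) (U : Cᵒᵖ)
    (a : F.obj U) : (cokernel.π m).app U (m.app U a) = 0 := by
  rw [← ConcreteCategory.comp_apply, ← NatTrans.comp_app, cokernel.condition]
  rfl

lemma exists_app_eq_of_exact {S : ShortComplex (Cᵒᵖ ⥤ AddCommGrpCat.{v})} (hS : S.Exact)
    {U : Cᵒᵖ} (ξ : S.X₂.obj U) (hξ : S.g.app U ξ = 0) : ∃ η, S.f.app U η = ξ :=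
  (ShortComplex.ab_exact_iff _).1 (hS.map ((evaluation Cᵒᵖ AddCommGrpCat.{v}).obj U)) ξ hξ

end

variable {C : Type u} [Category.{v} C] [Preadditive C]

lemma isFP_defect {B Z : C} (y : B ⟶ Z) : IsFP (defect C y) :=
  ⟨B, Z, y, cokernel.π _, cokernel.condition _,
    inferInstanceAs (Epi (cokernel.π (preadditiveYoneda.map y))),
    ShortComplex.exact_of_g_is_cokernel _ (cokernelIsCokernel _)⟩

lemma IsFP.of_iso {F G : Cᵒᵖ ⥤ AddCommGrpCat.{v}} (e : F ≅ G) (h : IsFP F) : IsFP G := by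
  obtain ⟨X, Y, f, p, w, hp, hex⟩ := h
  refine ⟨X, Y, f, p ≫ e.hom, by rw [reassoc_of% w, zero_comp], epi_comp _ _,
    ShortComplex.exact_of_iso ?_ hex⟩
  exact ShortComplex.isoMk (Iso.refl _) (Iso.refl _) e (by simp) (by simp)

namespace ExtCat

variable {ET : ExtCat C}

lemma E_map_comp_apply {A T' T Z : C} (a : T' ⟶ T) (t : T ⟶ Z) (δ : (ET.E.obj (op Z)).obj A) :
    (ET.E.map (a ≫ t).op).app A δ = (ET.E.map a.op).app A ((ET.E.map t.op).app A δ) := by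
  rw [op_comp, Functor.map_comp, NatTrans.comp_app, ConcreteCategory.comp_apply]

lemma exists_weak_pullback {A B Z W : C} {x : A ⟶ B} {y : B ⟶ Z} {δ} (hC : ET.Conf x y δ)
    (t : W ⟶ Z) :
    ∃ (U : C) (ψ : U ⟶ W), ET.IsDeflation ψ ∧ (∃ r : U ⟶ B, r ≫ y = ψ ≫ t) ∧
      ∀ {T : C} (w : T ⟶ W), (∃ r : T ⟶ B, r ≫ y = w ≫ t) → ∃ e : T ⟶ U, e ≫ ψ = w := by
  obtain ⟨U, x', ψ, hC'⟩ := ET.real ((ET.E.map t.op).app A δ)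
  refine ⟨U, ψ, ⟨A, x', _, hC'⟩, (ET.ex_right hC _).2 ?_, fun w hw => (ET.ex_right hC' w).2 ?_⟩
  · rw [E_map_comp_apply]
    exact (ET.ex_right hC' ψ).1 ⟨𝟙 U, Category.id_comp ψ⟩
  · rw [← E_map_comp_apply]
    exact (ET.ex_right hC _).1 hw

lemma exists_splitting_of_conf_zero {X G Y : C} {x : X ⟶ G} {d : G ⟶ Y}
    (hC : ET.Conf x d 0) :
    ∃ (p : G ⟶ X) (s : Y ⟶ G), x ≫ p = 𝟙 X ∧ s ≫ d = 𝟙 Y ∧ s ≫ p = 0 := by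
  obtain ⟨s, hs⟩ := (ET.ex_right hC (𝟙 Y)).2 (map_zero _)
  obtain ⟨r, hr⟩ := (ET.ex_left hC (𝟙 X)).2 (map_zero _)
  have hxd : x ≫ d = 0 := ET.conf_comp_zero hC
  refine ⟨r - d ≫ s ≫ r, s, ?_, hs, ?_⟩
  · simp [hr, reassoc_of% hxd]
  · simp [reassoc_of% hs]

/-- Realize `0 ∈ E(Y, X)` by `X ⟶ G ⟶ Y`, so that `G = X ⊕ Y` with `d` the projection to `Y`;
`e` is the pullback of the deflation `h ≫ f` along `(f, -1) : X ⊕ Y ⟶ Y`, followed by `d`. -/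
lemma exists_deflation_factors_both_ways {B X Y : C} (h : B ⟶ X) (f : X ⟶ Y)
    (hg : ET.IsDeflation (h ≫ f)) :
    ∃ (U : C) (e : U ⟶ Y), ET.IsDeflation e ∧ (∃ a : U ⟶ X, a ≫ f = e) ∧
      ∃ b : X ⟶ U, b ≫ e = f := by
  obtain ⟨A, x, δ, hC⟩ := hg
  obtain ⟨G, x₀, d, hC₀⟩ := ET.real (0 : (ET.E.obj (op Y)).obj X)
  have hxd : x₀ ≫ d = 0 := ET.conf_comp_zero hC₀
  obtain ⟨p, s, hxp, hsd, hsp⟩ := exists_splitting_of_conf_zero hC₀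
  obtain ⟨U, ψ, hψ, ⟨r, hr⟩, hlift⟩ := exists_weak_pullback hC (p ≫ f - d)
  have hw : (x₀ + f ≫ s) ≫ (p ≫ f - d) = 0 := by
    simp [reassoc_of% hxp, reassoc_of% hsp, hxd, hsd]
  obtain ⟨b, hb⟩ := hlift (x₀ + f ≫ s) ⟨0, by rw [hw, zero_comp]⟩
  refine ⟨U, ψ ≫ d, ET.defl_comp ψ d hψ ⟨X, x₀, 0, hC₀⟩, ⟨ψ ≫ p - r ≫ h, ?_⟩, b, ?_⟩
  · simp only [Preadditive.sub_comp, Category.assoc, hr, Preadditive.comp_sub]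
    abel
  · simp [reassoc_of% hb, hxd, hsd]

lemma Effaceable.of_epi {F G : Cᵒᵖ ⥤ AddCommGrpCat.{v}} (hF : Effaceable ET F) (q : F ⟶ G)
    [Epi q] : Effaceable ET G := by
  intro X ξ
  obtain ⟨ξ', rfl⟩ := (AddCommGrpCat.epi_iff_surjective (q.app (op X))).1 inferInstance ξ
  obtain ⟨Y, α, hα, hξ'⟩ := hF X ξ'
  exact ⟨Y, α, hα, by rw [← NatTrans.naturality_apply, hξ', map_zero]⟩

lemma Effaceable.of_mono {F G : Cᵒᵖ ⥤ AddCommGrpCat.{v}} (hG : Effaceable ET G) (q : F ⟶ G)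
    [Mono q] : Effaceable ET F := by
  intro X ξ
  obtain ⟨Y, α, hα, hξ⟩ := hG X (q.app (op X) ξ)
  refine ⟨Y, α, hα, (AddCommGrpCat.mono_iff_injective (q.app (op Y))).1 inferInstance ?_⟩
  rw [NatTrans.naturality_apply, hξ, map_zero]

lemma Effaceable.of_exact {S : ShortComplex (Cᵒᵖ ⥤ AddCommGrpCat.{v})} (hS : S.Exact)
    (h₁ : Effaceable ET S.X₁) (h₃ : Effaceable ET S.X₃) : Effaceable ET S.X₂ := by
  intro X ξ
  obtain ⟨Y, α, hα, hξ⟩ := h₃ X (S.g.app (op X) ξ)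
  rw [← NatTrans.naturality_apply] at hξ
  obtain ⟨η, hη⟩ := exists_app_eq_of_exact hS _ hξ
  obtain ⟨W, β, hβ, hη₀⟩ := h₁ Y η
  refine ⟨W, β ≫ α, ET.defl_comp β α hβ hα, ?_⟩
  rw [op_comp, Functor.map_comp, ConcreteCategory.comp_apply, ← hη, ← NatTrans.naturality_apply,
    hη₀, map_zero]

lemma effaceable_defect {B Z : C} {y : B ⟶ Z} (hy : ET.IsDeflation y) :
    Effaceable ET (defect C y) := by
  obtain ⟨A, x, δ, hC⟩ := hy
  intro X ξ
  obtain ⟨t, rfl⟩ := (AddCommGrpCat.epi_iff_surjective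
    ((cokernel.π (preadditiveYoneda.map y)).app (op X))).1 inferInstance ξ
  obtain ⟨U, ψ, hψ, ⟨r, hr⟩, -⟩ := exists_weak_pullback hC t
  refine ⟨U, ψ, hψ, ?_⟩
  exact (NatTrans.naturality_apply (cokernel.π _) ψ.op t).symm.trans
    ((congrArg _ hr.symm).trans (cokernel_π_app_app_apply (preadditiveYoneda.map y) (op U) r))

lemma mem_defSet_of_isFP_of_effaceable {F : Cᵒᵖ ⥤ AddCommGrpCat.{v}} (hF : IsFP F)
    (hE : Effaceable ET F) : F ∈ ET.defSet := by
  obtain ⟨X, Y, f, p, w, hp, hex⟩ := hF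
  obtain ⟨B, g, hg, hpg⟩ := hE Y (p.app (op Y) (𝟙 Y))
  have hpg' : p.app (op B) (g ≫ 𝟙 Y) = 0 := (NatTrans.naturality_apply p g.op (𝟙 Y)).trans hpg
  rw [Category.comp_id] at hpg'
  obtain ⟨h, rfl⟩ : ∃ h : B ⟶ X, h ≫ f = g := exists_app_eq_of_exact hex g hpg'
  obtain ⟨U, e, he, ⟨a, rfl⟩, b, hb⟩ := exists_deflation_factors_both_ways h f hg
  have hcoker : IsColimit (CokernelCofork.ofπ (f := preadditiveYoneda.map (a ≫ f)) p _) :=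
    CokernelCofork.isColimitOfIsColimitOfIff' hex.gIsCokernel _ fun W φ => by
      change preadditiveYoneda.map f ≫ φ = 0 ↔ _
      constructor
      · intro h0
        rw [Functor.map_comp, Category.assoc, h0, comp_zero]
      · intro h0
        rw [← hb, Functor.map_comp, Category.assoc, h0, comp_zero]
  exact ⟨U, Y, a ≫ f, he, ⟨hcoker.coconePointUniqueUpToIso (colimit.isColimit _)⟩⟩

lemma defSet_eq : ET.defSet = {F | IsFP F ∧ Effaceable ET F} := by
  ext F
  constructor
  · rintro ⟨B, Z, y, hy, ⟨e⟩⟩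
    exact ⟨(isFP_defect y).of_iso e.symm, (effaceable_defect hy).of_epi e.inv⟩
  · rintro ⟨hF, hE⟩
    exact mem_defSet_of_isFP_of_effaceable hF hE

end ExtCat

open ExtCat

theorem defSet_eq_effaceable_and_serre_general (ET : ExtCat C) :
    ET.defSet = {F | IsFP F ∧ Effaceable ET F} ∧
      IsSerreIn {F : Cᵒᵖ ⥤ AddCommGrpCat.{v} | IsFP F} ET.defSet := by
  rw [ET.defSet_eq]
  refine ⟨rfl, fun F hF => hF.1, ?_, ?_, ?_⟩
  · exact fun F G q _ hF hG => ⟨hF, hG.2.of_mono q⟩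
  · exact fun F G q _ hG hF => ⟨hG, hF.2.of_epi q⟩
  · exact fun S hS h₂ h₁ h₃ => ⟨h₂, Effaceable.of_exact hS.exact h₁.2 h₃.2⟩

/-- For a skeletally small extriangulated category `C` with weak
kernels, the subcategory `def E ⊆ mod C` of functors isomorphic to contravariant
defects coincides with the subcategory `eff E` of effaceable finitely presented
functors, and it is a Serre subcategory of `mod C`. -/
theorem defSet_eq_effaceable_and_serre [EssentiallySmall.{v} C]
    (hwk : HasWeakKernels C) (ET : ExtCat C) :
    ET.defSet = {F | IsFP F ∧ Effaceable ET F} ∧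
      IsSerreIn {F : Cᵒᵖ ⥤ AddCommGrpCat.{v} | IsFP F} ET.defSet :=
  defSet_eq_effaceable_and_serre_general ET

end Paper
end

section
/- Let (C, E, s) be an extriangulated category with enough projectives. There is an equivalence of categories s-def C / [s-epi C] ≅ mod C̲, where the functor sends a deflation y: B → C to the defect Coker(C̲(-,y̲): C̲(-,B) → C̲(-,C)). -/
open CategoryTheory Limits Opposite

universe v u



namespace Paper

open ZeroObject

namespace ExtCat

variable {C : Type u} [Category.{v} C] [Preadditive C] (ET : ExtCat C)

theorem isProj_zero [HasZeroObject C] : ET.IsProj (0 : C) := by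
  intro A B Z x y δ h c
  exact ⟨0, ((isZero_zero C).eq_of_src _ _)⟩

theorem isProj_biprod [HasBinaryBiproducts C] {P Q : C} (hP : ET.IsProj P) (hQ : ET.IsProj Q) :
    ET.IsProj (P ⊞ Q) := by
  intro A B Z x y δ h c
  obtain ⟨b₁, hb₁⟩ := hP x y δ h (biprod.inl ≫ c)
  obtain ⟨b₂, hb₂⟩ := hQ x y δ h (biprod.inr ≫ c)
  refine ⟨biprod.desc b₁ b₂, ?_⟩
  apply biprod.hom_ext' <;> simp [hb₁, hb₂]

theorem isInj_zero [HasZeroObject C] : ET.IsInj (0 : C) := by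
  intro A B Z x y δ h a
  exact ⟨0, ((isZero_zero C).eq_of_tgt _ _)⟩

theorem isInj_biprod [HasBinaryBiproducts C] {P Q : C} (hP : ET.IsInj P) (hQ : ET.IsInj Q) :
    ET.IsInj (P ⊞ Q) := by
  intro A B Z x y δ h a
  obtain ⟨b₁, hb₁⟩ := hP x y δ h (a ≫ biprod.fst)
  obtain ⟨b₂, hb₂⟩ := hQ x y δ h (a ≫ biprod.snd)
  refine ⟨biprod.lift b₁ b₂, ?_⟩
  apply biprod.hom_ext <;> simp [hb₁, hb₂]

/-- The ideal of morphisms factoring through a projective object. -/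
def projRel : HomRel C := fun {X Y} f g =>
  ∃ (P : C) (a : X ⟶ P) (b : P ⟶ Y), ET.IsProj P ∧ a ≫ b = f - g

/-- The ideal of morphisms factoring through an injective object. -/
def injRel : HomRel C := fun {X Y} f g =>
  ∃ (I : C) (a : X ⟶ I) (b : I ⟶ Y), ET.IsInj I ∧ a ≫ b = f - g

variable [HasZeroObject C] [HasBinaryBiproducts C]

instance : Congruence (projRel ET) where
  equivalence := by
    refine fun {X Y} => ⟨?_, ?_, ?_⟩
    · intro f
      exact ⟨0, 0, 0, ET.isProj_zero, by simp⟩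
    · rintro f g ⟨P, a, b, hP, hab⟩
      exact ⟨P, -a, b, hP, by rw [Preadditive.neg_comp, hab]; abel⟩
    · rintro f g h ⟨P, a, b, hP, hab⟩ ⟨Q, a', b', hQ, hab'⟩
      refine ⟨P ⊞ Q, biprod.lift a a', biprod.desc b b', ET.isProj_biprod hP hQ, ?_⟩
      rw [biprod.lift_desc, hab, hab']; abel
  comp_left := by
    rintro X Y Z f g g' ⟨P, a, b, hP, hab⟩
    exact ⟨P, f ≫ a, b, hP, by rw [Category.assoc, hab, Preadditive.comp_sub]⟩
  comp_right := by
    rintro X Y Z f f' g ⟨P, a, b, hP, hab⟩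
    exact ⟨P, a, b ≫ g, hP, by rw [← Category.assoc, hab, Preadditive.sub_comp]⟩

instance : Congruence (injRel ET) where
  equivalence := by
    refine fun {X Y} => ⟨?_, ?_, ?_⟩
    · intro f
      exact ⟨0, 0, 0, ET.isInj_zero, by simp⟩
    · rintro f g ⟨P, a, b, hP, hab⟩
      exact ⟨P, -a, b, hP, by rw [Preadditive.neg_comp, hab]; abel⟩
    · rintro f g h ⟨P, a, b, hP, hab⟩ ⟨Q, a', b', hQ, hab'⟩
      refine ⟨P ⊞ Q, biprod.lift a a', biprod.desc b b', ET.isInj_biprod hP hQ, ?_⟩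
      rw [biprod.lift_desc, hab, hab']; abel
  comp_left := by
    rintro X Y Z f g g' ⟨P, a, b, hP, hab⟩
    exact ⟨P, f ≫ a, b, hP, by rw [Category.assoc, hab, Preadditive.comp_sub]⟩
  comp_right := by
    rintro X Y Z f f' g ⟨P, a, b, hP, hab⟩
    exact ⟨P, a, b ≫ g, hP, by rw [← Category.assoc, hab, Preadditive.sub_comp]⟩

theorem projRel_add : ∀ ⦃X Y : C⦄ (f₁ f₂ g₁ g₂ : X ⟶ Y)
    (_ : projRel ET f₁ f₂) (_ : projRel ET g₁ g₂), projRel ET (f₁ + g₁) (f₂ + g₂) := by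
  rintro X Y f₁ f₂ g₁ g₂ ⟨P, a, b, hP, hab⟩ ⟨Q, a', b', hQ, hab'⟩
  refine ⟨P ⊞ Q, biprod.lift a a', biprod.desc b b', ET.isProj_biprod hP hQ, ?_⟩
  rw [biprod.lift_desc, hab, hab']; abel

theorem injRel_add : ∀ ⦃X Y : C⦄ (f₁ f₂ g₁ g₂ : X ⟶ Y)
    (_ : injRel ET f₁ f₂) (_ : injRel ET g₁ g₂), injRel ET (f₁ + g₁) (f₂ + g₂) := by
  rintro X Y f₁ f₂ g₁ g₂ ⟨P, a, b, hP, hab⟩ ⟨Q, a', b', hQ, hab'⟩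
  refine ⟨P ⊞ Q, biprod.lift a a', biprod.desc b b', ET.isInj_biprod hP hQ, ?_⟩
  rw [biprod.lift_desc, hab, hab']; abel

/-- The projectively stable category `C̲ = C/[P]`. -/
abbrev Stab := Quotient (projRel ET)

/-- The injectively stable category `C̄ = C/[I]`. -/
abbrev CoStab := Quotient (injRel ET)

noncomputable instance : Preadditive (Stab ET) :=
  Quotient.preadditive (projRel ET) (projRel_add ET)

noncomputable instance : Preadditive (CoStab ET) :=
  Quotient.preadditive (injRel ET) (injRel_add ET)

/-- The quotient functor `C ⥤ C̲`. -/
def toStab : C ⥤ Stab ET := Quotient.functor (projRel ET)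

/-- The quotient functor `C ⥤ C̄`. -/
def toCoStab : C ⥤ CoStab ET := Quotient.functor (injRel ET)

/-- The contravariant defect as a finitely presented module over `C̲`:
`Coker(C̲(-,B) ⟶ C̲(-,Z))`. -/
noncomputable def sdefect {B Z : C} (y : B ⟶ Z) : (Stab ET)ᵒᵖ ⥤ AddCommGrpCat.{v} :=
  cokernel (preadditiveYoneda.map ((ET.toStab).map y))

/-- The covariant defect as a finitely presented module over `C̄ᵒᵖ`:
`Coker(C̄(B,-) ⟶ C̄(A,-))`. -/
noncomputable def scodefect {A B : C} (x : A ⟶ B) : CoStab ET ⥤ AddCommGrpCat.{v} :=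
  cokernel (preadditiveCoyoneda.map ((ET.toCoStab).map x).op)

end ExtCat

end Paper

namespace Paper

open ExtCat

variable {C : Type u} [Category.{v} C] [Preadditive C]

/-- The category `s-def C` of `s`-deflations: the full subcategory of the morphism
category of `C` consisting of deflations. -/
def Defl (ET : ExtCat C) : Type max u v := {D : Σ (B Z : C), B ⟶ Z // ET.IsDeflation D.2.2}

instance (ET : ExtCat C) : Category (Defl ET) where
  Hom D D' := {p : (D.1.1 ⟶ D'.1.1) × (D.1.2.1 ⟶ D'.1.2.1) //
    D.1.2.2 ≫ p.2 = p.1 ≫ D'.1.2.2}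
  id D := ⟨(𝟙 _, 𝟙 _), by simp⟩
  comp {D D' D''} f g := ⟨(f.1.1 ≫ g.1.1, f.1.2 ≫ g.1.2), by
    rw [← Category.assoc, f.2, Category.assoc, g.2, ← Category.assoc]⟩
  id_comp f := by apply Subtype.ext; simp
  comp_id f := by apply Subtype.ext; simp
  assoc f g h := by apply Subtype.ext; simp

/-- The ideal of morphisms of `s-def C` factoring through a split epimorphism. -/
def deflRel (ET : ExtCat C) : HomRel (Defl ET) := fun {D D'} f g =>
  ∃ (D₀ : Defl ET) (u : D ⟶ D₀) (v : D₀ ⟶ D'), IsSplitEpi D₀.1.2.2 ∧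
    (u ≫ v).1.1 = f.1.1 - g.1.1 ∧ (u ≫ v).1.2 = f.1.2 - g.1.2

end Paper

/-!
A morphism `(a, c)` of deflations `y → y'` induces zero on defects iff `C̲(-, c)` lands in the
image of `C̲(-, y')`, i.e. iff `c` factors through `y'` in `C̲`; since morphisms from projectives
lift along deflations, this happens iff `c` factors through `y'` in `C`, which is exactly the
condition for `(a, c)` to factor through the split deflation `A' ⊕ Z → Z`. So the defect functor
is faithful on `s-def C / [s-epi C]`. It is full by Yoneda: a map of defects lifts along
`C̲(-, Z') ↠ Coker` to some `C̲(-, ζ)`. For essential surjectivity, present a finitely presented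
functor as `Coker C̲(-, f)` with `f : X → Y`. Realize the pullback along `[f, -1] : X ⊕ Y → Y`
of the extension of a projective cover `P ↠ Y` by a deflation `V → X ⊕ Y`; composed with the
projection to `Y` it gives a deflation `y : V → Y` through which `f` factors and which factors
through `f` modulo projectives, so `Coker C̲(-, y) ≅ Coker C̲(-, f)`.
-/

namespace CategoryTheory

open Limits Opposite

noncomputable def Limits.cokernelIsoOfFactorThrough {A : Type*} [Category A]
    [HasZeroMorphisms A] {X X' Y : A} {f : X ⟶ Y} {g : X' ⟶ Y} [HasCokernel f] [HasCokernel g]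
    (a : X ⟶ X') (b : X' ⟶ X) (ha : a ≫ g = f) (hb : b ≫ f = g) : cokernel f ≅ cokernel g where
  hom := cokernel.desc f (cokernel.π g) (by rw [← ha, Category.assoc, cokernel.condition,
    comp_zero])
  inv := cokernel.desc g (cokernel.π f) (by rw [← hb, Category.assoc, cokernel.condition,
    comp_zero])

variable {D : Type*} [Category.{v} D] [Preadditive D]

instance preadditiveYoneda_additive :
    (preadditiveYoneda : D ⥤ Dᵒᵖ ⥤ AddCommGrpCat.{v}).Additive where
  map_add {_ _ f g} := by
    ext X x
    exact Preadditive.comp_add _ _ _ x f g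

lemma preadditiveYoneda_obj_hom_ext {T : D} {F : Dᵒᵖ ⥤ AddCommGrpCat.{v}}
    {κ₁ κ₂ : preadditiveYoneda.obj T ⟶ F} (h : κ₁.app (op T) (𝟙 T) = κ₂.app (op T) (𝟙 T)) :
    κ₁ = κ₂ := by
  have key (κ : preadditiveYoneda.obj T ⟶ F) {X : Dᵒᵖ} (x : X.unop ⟶ T) :
      κ.app X x = F.map x.op (κ.app (op T) (𝟙 T)) :=
    (congrArg (κ.app X) (Category.comp_id x).symm).trans
      (ConcreteCategory.congr_hom (κ.naturality x.op) (𝟙 T))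
  ext X x
  exact (key κ₁ x).trans ((congrArg _ h).trans (key κ₂ x).symm)

lemma exists_preadditiveYoneda_map_comp_eq {T T' : D} {G : Dᵒᵖ ⥤ AddCommGrpCat.{v}}
    (p : preadditiveYoneda.obj T' ⟶ G) [Epi p] (ψ : preadditiveYoneda.obj T ⟶ G) :
    ∃ ζ : T ⟶ T', preadditiveYoneda.map ζ ≫ p = ψ := by
  obtain ⟨ζ, hζ⟩ := (AddCommGrpCat.epi_iff_surjective (p.app (op T))).mp inferInstance
    (ψ.app (op T) (𝟙 T))
  exact ⟨ζ, preadditiveYoneda_obj_hom_ext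
    ((congrArg (p.app (op T)) (Category.id_comp ζ)).trans hζ)⟩

lemma preadditiveYoneda_map_comp_cokernel_π_eq_zero_iff {W T T' : D} (q : W ⟶ T)
    (s : T' ⟶ T) :
    preadditiveYoneda.map s ≫ cokernel.π (preadditiveYoneda.map q) = 0 ↔ ∃ w, w ≫ q = s := by
  refine ⟨fun hs => ?_, fun ⟨w, hw⟩ => ?_⟩
  · have hexact := (ShortComplex.exact_of_g_is_cokernel
      (ShortComplex.mk _ _ (cokernel.condition (preadditiveYoneda.map q)))
      (cokernelIsCokernel _)).map ((evaluation Dᵒᵖ AddCommGrpCat.{v}).obj (op T'))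
    rw [ShortComplex.ab_exact_iff] at hexact
    exact hexact s ((congrArg _ (Category.id_comp s).symm).trans
      (ConcreteCategory.congr_hom (NatTrans.congr_app hs (op T')) (𝟙 T')))
  · rw [← hw, Functor.map_comp, Category.assoc, cokernel.condition, comp_zero]

end CategoryTheory

namespace Paper

open ExtCat

variable {C : Type u} [Category.{v} C] [Preadditive C]

lemma isFP_cokernel_preadditiveYoneda_map {X Y : C} (f : X ⟶ Y) :
    IsFP (cokernel (preadditiveYoneda.map f)) :=
  ⟨X, Y, f, cokernel.π _, cokernel.condition _, inferInstance,
    ShortComplex.exact_of_g_is_cokernel _ (cokernelIsCokernel _)⟩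

lemma IsFP.exists_iso_cokernel {F : Cᵒᵖ ⥤ AddCommGrpCat.{v}} (hF : IsFP F) :
    ∃ (X Y : C) (f : X ⟶ Y), Nonempty (F ≅ cokernel (preadditiveYoneda.map f)) := by
  obtain ⟨X, Y, f, p, w, hp, hexact⟩ := hF
  exact ⟨X, Y, f, ⟨IsColimit.coconePointUniqueUpToIso hexact.gIsCokernel (colimit.isColimit _)⟩⟩

namespace ExtCat

variable {ET : ExtCat C}

lemma E_map_comp_app {T' T Z A : C} (g : T' ⟶ T) (h : T ⟶ Z) (δ : (ET.E.obj (op Z)).obj A) :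
    (ET.E.map (g ≫ h).op).app A δ = (ET.E.map g.op).app A ((ET.E.map h.op).app A δ) := by
  rw [op_comp, Functor.map_comp]
  rfl

lemma E_map_zero_app {T Z A : C} (δ : (ET.E.obj (op Z)).obj A) :
    (ET.E.map (0 : T ⟶ Z).op).app A δ = 0 := by
  obtain ⟨B, x, y, h⟩ := ET.real δ
  exact (ET.ex_right h 0).mp ⟨0, zero_comp⟩

variable (ET) in
lemma exists_binaryBicone_conf_zero (A Z : C) :
    ∃ b : BinaryBicone A Z, ET.Conf b.inl b.snd 0 := by
  obtain ⟨N, ι, π, h⟩ := ET.real (0 : (ET.E.obj (op Z)).obj A)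
  obtain ⟨σ, hσ⟩ := (ET.ex_right h (𝟙 Z)).mpr (map_zero _)
  obtain ⟨ρ, hρ⟩ := (ET.ex_left h (𝟙 A)).mpr (map_zero _)
  have hιπ : ι ≫ π = 0 := ET.conf_comp_zero h
  -- the retraction `ρ` of `ι`, corrected so that it kills the section `σ` of `π`
  refine ⟨{ pt := N, fst := ρ - π ≫ σ ≫ ρ, snd := π, inl := ι, inr := σ
            inl_fst := ?_, inl_snd := hιπ, inr_fst := ?_, inr_snd := hσ }, h⟩
  · rw [Preadditive.comp_sub, hρ, reassoc_of% hιπ, zero_comp, sub_zero]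
  · rw [Preadditive.comp_sub, reassoc_of% hσ, sub_self]

lemma IsDeflation.exists_comp_eq_of_projRel {B Z T : C} {y : B ⟶ Z} (hy : ET.IsDeflation y)
    {s : T ⟶ Z} {w : T ⟶ B} (h : projRel ET s (w ≫ y)) : ∃ w' : T ⟶ B, w' ≫ y = s := by
  obtain ⟨A, x, δ, hconf⟩ := hy
  obtain ⟨P, a, b, hP, hab⟩ := h
  obtain ⟨l, hl⟩ := hP x y δ hconf b
  exact ⟨w + a ≫ l, by rw [Preadditive.add_comp, Category.assoc, hl, hab, add_sub_cancel]⟩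

lemma exists_isDeflation_stably_equivalent (hep : ET.EnoughProj) {X Y : C} (f : X ⟶ Y) :
    ∃ (V : C) (y : V ⟶ Y) (h : X ⟶ V) (u : V ⟶ X),
      ET.IsDeflation y ∧ h ≫ y = f ∧ projRel ET y (u ≫ f) := by
  obtain ⟨A, P, a, p, δ, hP, hp⟩ := hep Y
  obtain ⟨b, hb⟩ := ET.exists_binaryBicone_conf_zero X Y
  obtain ⟨V, α, v, hv⟩ := ET.real ((ET.E.map (b.fst ≫ f - b.snd).op).app A δ)
  obtain ⟨h, hh⟩ := (ET.ex_right hv (b.inl + f ≫ b.inr)).mpr (by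
    rw [← E_map_comp_app, show (b.inl + f ≫ b.inr) ≫ (b.fst ≫ f - b.snd) = 0 by simp,
      E_map_zero_app])
  obtain ⟨L, hL⟩ := (ET.ex_right hp (v ≫ (b.fst ≫ f - b.snd))).mpr (by
    rw [E_map_comp_app]
    exact (ET.ex_right hv v).mp ⟨𝟙 V, Category.id_comp v⟩)
  refine ⟨V, v ≫ b.snd, h, v ≫ b.fst, ET.defl_comp v b.snd ⟨A, α, _, hv⟩ ⟨X, b.inl, 0, hb⟩,
    by simp [reassoc_of% hh], P, -L, p, hP, ?_⟩
  rw [Preadditive.neg_comp, hL]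
  simp

lemma toStab_map_surjective {X Y : C} (f : ET.toStab.obj X ⟶ ET.toStab.obj Y) :
    ∃ f₀ : X ⟶ Y, ET.toStab.map f₀ = f :=
  (Quotient.functor (projRel ET)).map_surjective f

section Stable

variable [HasZeroObject C] [HasBinaryBiproducts C]

lemma toStab_map_eq_iff {X Y : C} (f g : X ⟶ Y) :
    ET.toStab.map f = ET.toStab.map g ↔ projRel ET f g :=
  Quotient.functor_map_eq_iff _ f g

instance toStab_additive : (toStab ET).Additive :=
  Quotient.functor_additive _ (projRel_add ET)

lemma IsDeflation.preadditiveYoneda_map_comp_cokernel_π_eq_zero_iff {B Z T : C} {y : B ⟶ Z}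
    (hy : ET.IsDeflation y) (s : T ⟶ Z) :
    preadditiveYoneda.map (ET.toStab.map s) ≫
        cokernel.π (preadditiveYoneda.map (ET.toStab.map y)) = 0 ↔
      ∃ w : T ⟶ B, w ≫ y = s := by
  rw [CategoryTheory.preadditiveYoneda_map_comp_cokernel_π_eq_zero_iff]
  refine ⟨fun ⟨w, hw⟩ => ?_, fun ⟨w, hw⟩ => ⟨ET.toStab.map w, by rw [← Functor.map_comp, hw]⟩⟩
  obtain ⟨w, rfl⟩ := toStab_map_surjective w
  exact hy.exists_comp_eq_of_projRel ((toStab_map_eq_iff _ _).mp (by rw [Functor.map_comp, hw]))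

end Stable

end ExtCat

section DeflationCategory

variable {ET : ExtCat C}

@[simp]
lemma Defl.id_val (D : Defl ET) : (𝟙 D : D ⟶ D).1 = (𝟙 D.1.1, 𝟙 D.1.2.1) := rfl

@[simp]
lemma Defl.comp_val {D D' D'' : Defl ET} (f : D ⟶ D') (g : D' ⟶ D'') :
    (f ≫ g).1 = (f.1.1 ≫ g.1.1, f.1.2 ≫ g.1.2) := rfl

lemma deflRel_of_comp_eq_sub {D D' : Defl ET} {f g : D ⟶ D'} (w : D.1.2.1 ⟶ D'.1.1)
    (hw : w ≫ D'.1.2.2 = f.1.2 - g.1.2) : deflRel ET f g := by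
  obtain ⟨A', x', δ', hconf'⟩ := D'.2
  have hx'y' : x' ≫ D'.1.2.2 = 0 := ET.conf_comp_zero hconf'
  have hker : ((f.1.1 - g.1.1) - D.1.2.2 ≫ w) ≫ D'.1.2.2 = 0 := by
    rw [Preadditive.sub_comp, Preadditive.sub_comp, ← f.2, ← g.2, Category.assoc, hw,
      Preadditive.comp_sub, sub_self]
  obtain ⟨τ, hτ⟩ := ET.ex_mid_right hconf' _ hker
  obtain ⟨b, hb⟩ := ET.exists_binaryBicone_conf_zero A' D.1.2.1
  -- `f - g` factors as `(τ ≫ inl + y ≫ inr, 𝟙)` followed by `(fst ≫ x' + snd ≫ w, f - g)`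
  -- through the split deflation `snd : A' ⊕ Z → Z`
  refine ⟨⟨⟨b.pt, D.1.2.1, b.snd⟩, A', b.inl, 0, hb⟩,
    ⟨(τ ≫ b.inl + D.1.2.2 ≫ b.inr, 𝟙 _), by simp⟩,
    ⟨(b.fst ≫ x' + b.snd ≫ w, f.1.2 - g.1.2), by simp [hx'y', hw]⟩,
    ⟨⟨⟨b.inr, b.inr_snd⟩⟩⟩, ?_, Category.id_comp _⟩
  change (τ ≫ b.inl + D.1.2.2 ≫ b.inr) ≫ (b.fst ≫ x' + b.snd ≫ w) = f.1.1 - g.1.1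
  simp [hτ]

lemma deflRel_iff {D D' : Defl ET} (f g : D ⟶ D') :
    deflRel ET f g ↔ ∃ w : D.1.2.1 ⟶ D'.1.1, w ≫ D'.1.2.2 = f.1.2 - g.1.2 := by
  refine ⟨?_, fun ⟨w, hw⟩ => deflRel_of_comp_eq_sub w hw⟩
  rintro ⟨D₀, u, v, ⟨⟨s⟩⟩, -, huv⟩
  refine ⟨u.1.2 ≫ s.section_ ≫ v.1.1, ?_⟩
  rw [← huv, Category.assoc, Category.assoc, ← v.2, s.id_assoc]
  rfl

end DeflationCategory

section DefectFunctor

variable (ET : ExtCat C) [HasZeroObject C] [HasBinaryBiproducts C]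

noncomputable def defectFunctor :
    Defl ET ⥤
      ObjectProperty.FullSubcategory (fun F : (Stab ET)ᵒᵖ ⥤ AddCommGrpCat.{v} => IsFP F) where
  obj D := ⟨cokernel (preadditiveYoneda.map (ET.toStab.map D.1.2.2)),
    isFP_cokernel_preadditiveYoneda_map _⟩
  map f := ObjectProperty.homMk <| cokernel.map _ _ (preadditiveYoneda.map (ET.toStab.map f.1.1))
    (preadditiveYoneda.map (ET.toStab.map f.1.2)) (by simp only [← Functor.map_comp, f.2])
  map_id D := ObjectProperty.hom_ext _ (coequalizer.hom_ext (by simp))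
  map_comp f g := ObjectProperty.hom_ext _ (coequalizer.hom_ext (by simp))

variable {ET}

lemma cokernel_π_comp_defectFunctor_map {D D' : Defl ET} (f : D ⟶ D') :
    cokernel.π (preadditiveYoneda.map (ET.toStab.map D.1.2.2)) ≫ ((defectFunctor ET).map f).hom =
      preadditiveYoneda.map (ET.toStab.map f.1.2) ≫
        cokernel.π (preadditiveYoneda.map (ET.toStab.map D'.1.2.2)) :=
  cokernel.π_desc _ _ _

lemma defectFunctor_map_eq_iff {D D' : Defl ET} (f g : D ⟶ D') :
    (defectFunctor ET).map f = (defectFunctor ET).map g ↔ deflRel ET f g := by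
  rw [deflRel_iff, ← D'.2.preadditiveYoneda_map_comp_cokernel_π_eq_zero_iff, Functor.map_sub,
    Functor.map_sub, Preadditive.sub_comp, sub_eq_zero, ← cokernel_π_comp_defectFunctor_map,
    ← cokernel_π_comp_defectFunctor_map]
  exact ⟨fun h => h ▸ rfl, fun h => ObjectProperty.hom_ext _ ((cancel_epi (cokernel.π _)).mp h)⟩

lemma deflRel_eq_homRel_defectFunctor : deflRel ET = (defectFunctor ET).homRel := by
  funext D D' f g
  exact propext (defectFunctor_map_eq_iff f g).symm

instance : (defectFunctor ET).Full where
  map_surjective {D D'} φ := by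
    obtain ⟨ζ, hζ⟩ := exists_preadditiveYoneda_map_comp_eq (cokernel.π _)
      (cokernel.π (preadditiveYoneda.map (ET.toStab.map D.1.2.2)) ≫ φ.hom)
    obtain ⟨ζ, rfl⟩ := toStab_map_surjective ζ
    obtain ⟨b, hb⟩ :=
      (D'.2.preadditiveYoneda_map_comp_cokernel_π_eq_zero_iff (D.1.2.2 ≫ ζ)).mp (by
        rw [Functor.map_comp, Functor.map_comp, Category.assoc, hζ]
        exact (cokernel.condition_assoc _ _).trans zero_comp)
    refine ⟨⟨(b, ζ), hb.symm⟩, ObjectProperty.hom_ext _ ((cancel_epi (cokernel.π _)).mp ?_)⟩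
    rw [cokernel_π_comp_defectFunctor_map]
    exact hζ

lemma defectFunctor_essSurj (hep : ET.EnoughProj) : (defectFunctor ET).EssSurj where
  mem_essImage F := by
    obtain ⟨⟨X⟩, ⟨Y⟩, f, ⟨e⟩⟩ := F.property.exists_iso_cokernel
    obtain ⟨f, rfl⟩ := toStab_map_surjective (ET := ET) (X := X) (Y := Y) f
    obtain ⟨V, y, h, u, hy, hh, hu⟩ := exists_isDeflation_stably_equivalent hep f
    have hu : preadditiveYoneda.map (ET.toStab.map u) ≫ preadditiveYoneda.map (ET.toStab.map f) =
        preadditiveYoneda.map (ET.toStab.map y) := by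
      rw [← Functor.map_comp, ← Functor.map_comp, (toStab_map_eq_iff _ _).mpr hu]
    have hh : preadditiveYoneda.map (ET.toStab.map h) ≫ preadditiveYoneda.map (ET.toStab.map y) =
        preadditiveYoneda.map (ET.toStab.map f) := by
      rw [← Functor.map_comp, ← Functor.map_comp, hh]
    exact ⟨⟨⟨V, Y, y⟩, hy⟩,
      ⟨ObjectProperty.isoMk _ (cokernelIsoOfFactorThrough _ _ hu hh ≪≫ e.symm)⟩⟩

end DefectFunctor

variable [HasZeroObject C] [HasBinaryBiproducts C]

/-- For an extriangulated category `C` with enough projectives there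
is an equivalence `s-def C/[s-epi C] ≌ mod C̲` sending (the class of) a deflation
`y : B ⟶ Z` to its defect `Coker(C̲(-,B) ⟶ C̲(-,Z))`. -/
theorem deflations_mod_split_epis_equiv_mod_stab (ET : ExtCat C) (hep : ET.EnoughProj) :
    ∃ e : CategoryTheory.Quotient (deflRel ET) ≌
          ObjectProperty.FullSubcategory (fun F : (Stab ET)ᵒᵖ ⥤ AddCommGrpCat.{v} => IsFP F),
      ∀ D : Defl ET,
        Nonempty ((e.functor.obj ((Quotient.functor (deflRel ET)).obj D)).obj ≅
          sdefect ET D.1.2.2) := by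
  have := defectFunctor_essSurj hep
  rw [deflRel_eq_homRel_defectFunctor]
  exact ⟨(CategoryTheory.Quotient.lift (defectFunctor ET).homRel (defectFunctor ET)
    fun _ _ _ _ => id).asEquivalence, fun D => ⟨Iso.refl _⟩⟩

end Paper
end
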